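/- arXiv:1701.00319 — 6 statements merged into one kernel-verified Lean document; each statement's English description precedes it below -/
import Mathlib

section
/- Let G = (V,E) be a simple connected graph in which every vertex has degree at most 2, let κ ≥ 3 be an odd integer, and let (X_t)_{t≥0} be the κ-color FCA trajectory on G started from an arbitrary configuration X_0 : V → ℤ/κℤ. Then no edge of G flips at any time t ≥ ⌊κ/2⌋. -/
open scoped Classical

noncomputable section

namespace FCA

/-- The blinking color `b(κ) = ⌊(κ-1)/2⌋`. -/
def blink (κ : ℕ) : ℕ := (κ - 1) / 2

variable {V : Type*}

/-- One step of the κ-color firefly cellular automaton on a graph `G`. -/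
def gstep (κ : ℕ) (G : SimpleGraph V) (X : V → ZMod κ) : V → ZMod κ := fun v =>
  if (X v).val > blink κ ∧ ∃ u, G.Adj v u ∧ (X u).val = blink κ
  then X v else X v + 1

/-- The FCA trajectory on a graph `G` started from `X0`. -/
def gtraj (κ : ℕ) (G : SimpleGraph V) (X0 : V → ZMod κ) : ℕ → V → ZMod κ
  | 0 => X0
  | t + 1 => gstep κ G (gtraj κ G X0 t)

/-- The associated 1-form of a configuration on an ordered pair of adjacent vertices:
the representative of `X v - X u (mod κ)` in `[-⌊κ/2⌋, ⌊κ/2⌋]`, with the ambiguous case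
(for κ even, `X v - X u ≡ κ/2`) resolved to `κ/2` if `(X u).val ≤ b(κ)` and to `-κ/2`
if `(X v).val ≤ b(κ)`. -/
def gdform (κ : ℕ) (X : V → ZMod κ) (u v : V) : ℤ :=
  let d : ℕ := (X v - X u).val
  if 2 * d < κ then (d : ℤ)
  else if κ < 2 * d then (d : ℤ) - (κ : ℤ)
  else if (X u).val ≤ blink κ then ((κ / 2 : ℕ) : ℤ) else -((κ / 2 : ℕ) : ℤ)

/-- The edge `{u,v}` flips at time `t`: `dX_t(u,v)` and `dX_{t+1}(u,v)` have opposite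
strict signs. -/
def gflips (κ : ℕ) (G : SimpleGraph V) (X0 : V → ZMod κ) (t : ℕ) (u v : V) : Prop :=
  (0 < gdform κ (gtraj κ G X0 t) u v ∧ gdform κ (gtraj κ G X0 (t + 1)) u v < 0) ∨
  (gdform κ (gtraj κ G X0 t) u v < 0 ∧ 0 < gdform κ (gtraj κ G X0 (t + 1)) u v)

end FCA

open FCA

namespace FCAProof

variable {V : Type*}

lemma zval_sub {κ : ℕ} [NeZero κ] (x : ZMod κ) (n : ℕ) (h : n ≤ x.val) :
    (x - (n : ZMod κ)).val = x.val - n := by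
  have hx : ((x.val - n : ℕ) : ZMod κ) = x - (n : ZMod κ) := by
    have h2 : ((x.val - n : ℕ) : ZMod κ) + (n : ZMod κ) = x := by
      rw [← Nat.cast_add, Nat.sub_add_cancel h, ZMod.natCast_zmod_val]
    exact eq_sub_of_add_eq h2
  rw [← hx, ZMod.val_cast_of_lt (lt_of_le_of_lt (Nat.sub_le _ _) x.val_lt)]

lemma add_one_ne {κ : ℕ} (hκ : 2 ≤ κ) (x : ZMod κ) : x + 1 ≠ x := by
  haveI : NeZero κ := ⟨by omega⟩
  intro h
  have h1 : (1 : ZMod κ) = 0 := by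
    have h2 : x + 1 = x + 0 := by rw [add_zero]; exact h
    exact add_left_cancel h2
  have h3 := ZMod.val_one_eq_one_mod κ
  rw [h1] at h3
  simp [ZMod.val_zero] at h3
  omega

lemma step_or {κ : ℕ} {G : SimpleGraph V} {X : ℕ → V → ZMod κ}
    (hstep : ∀ n, X (n + 1) = gstep κ G (X n)) (t : ℕ) (v : V) :
    X (t + 1) v = X t v ∨ X (t + 1) v = X t v + 1 := by
  rw [hstep]
  unfold gstep
  split_ifs <;> simp

lemma stay_hold {κ : ℕ} (hκ : 2 ≤ κ) {G : SimpleGraph V} {X : ℕ → V → ZMod κ}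
    (hstep : ∀ n, X (n + 1) = gstep κ G (X n)) {t : ℕ} {v : V}
    (h : X (t + 1) v = X t v) :
    (X t v).val > blink κ ∧ ∃ w, G.Adj v w ∧ (X t w).val = blink κ := by
  rw [hstep] at h
  unfold gstep at h
  split_ifs at h with hc
  · exact hc
  · exact absurd h (add_one_ne hκ _)

lemma hold_eq {κ : ℕ} {G : SimpleGraph V} {X : ℕ → V → ZMod κ}
    (hstep : ∀ n, X (n + 1) = gstep κ G (X n)) {t : ℕ} {v : V}
    (h1 : (X t v).val > blink κ)
    (h2 : ∃ w, G.Adj v w ∧ (X t w).val = blink κ) :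
    X (t + 1) v = X t v := by
  rw [hstep]
  unfold gstep
  rw [if_pos ⟨h1, h2⟩]

lemma traj_add {κ : ℕ} (hκ : 2 ≤ κ) {G : SimpleGraph V} {X : ℕ → V → ZMod κ}
    (hstep : ∀ n, X (n + 1) = gstep κ G (X n)) (r : ℕ) (w : V) :
    ∀ n : ℕ, ∃ N : ℕ, N ≤ n ∧
      X (r + n) w = X r w + (N : ZMod κ) ∧
      (1 ≤ n → (X r w).val = blink κ → 1 ≤ N) := by
  intro n
  induction n with
  | zero => exact ⟨0, le_refl _, by simp, by omega⟩
  | succ n ih =>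
    obtain ⟨N, hN, he, h1⟩ := ih
    rcases step_or hstep (r + n) w with hst | hmv
    · refine ⟨N, by omega, by rw [show r + (n + 1) = r + n + 1 from rfl, hst, he], ?_⟩
      intro _ hb
      rcases Nat.eq_zero_or_pos n with hn | hn
      · subst hn
        simp only [Nat.add_zero] at hst
        have := (stay_hold hκ hstep hst).1
        omega
      · exact h1 hn hb
    · refine ⟨N + 1, by omega, ?_, by omega⟩
      rw [show r + (n + 1) = r + n + 1 from rfl, hmv, he]
      push_cast
      ring

lemma blink_return {κ : ℕ} (hκ : 2 ≤ κ) {G : SimpleGraph V} {X : ℕ → V → ZMod κ}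
    (hstep : ∀ n, X (n + 1) = gstep κ G (X n))
    {r t' : ℕ} {w : V} (hrt : r < t')
    (h1 : (X r w).val = blink κ) (h2 : (X t' w).val = blink κ) :
    κ ≤ t' - r := by
  haveI : NeZero κ := ⟨by omega⟩
  obtain ⟨N, hN, he, hone⟩ := traj_add hκ hstep r w (t' - r)
  rw [Nat.add_sub_cancel' (le_of_lt hrt)] at he
  have heq : X t' w = X r w := by
    rw [← ZMod.natCast_zmod_val (X t' w), ← ZMod.natCast_zmod_val (X r w), h1, h2]
  rw [heq] at he
  have hz : (N : ZMod κ) = 0 := by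
    have h5 := he
    rwa [left_eq_add] at h5
  have hdvd : κ ∣ N := (ZMod.natCast_eq_zero_iff N κ).mp hz
  have hN1 : 1 ≤ N := hone (by omega) h1
  have := Nat.le_of_dvd (by omega) hdvd
  omega

lemma nbr_unique {G : SimpleGraph V} (hdeg : ∀ v : V, (G.neighborSet v).encard ≤ 2)
    {u v w w' : V} (huv : G.Adj u v) (h1 : G.Adj u w) (h2 : G.Adj u w')
    (hw : w ≠ v) (hw' : w' ≠ v) : w = w' := by
  by_contra hne
  have hsub : ({v, w, w'} : Set V) ⊆ G.neighborSet u := by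
    intro x hx
    rcases hx with h | h | h <;> subst h <;>
      simp [SimpleGraph.mem_neighborSet, huv, h1, h2]
  have h3 : ({v, w, w'} : Set V).encard = 3 := by
    rw [Set.encard_insert_of_notMem (by simp [Ne.symm hw, Ne.symm hw']),
      Set.encard_pair hne]
    rfl
  have h4 := (Set.encard_le_encard hsub).trans (hdeg u)
  rw [h3] at h4
  norm_num at h4

end FCAProof

namespace FCAProof

lemma gdform_odd {κ : ℕ} (hodd : Odd κ) (X : V → ZMod κ) (u v : V) :
    gdform κ X u v = if 2 * (X v - X u).val < κ then ((X v - X u).val : ℤ)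
      else ((X v - X u).val : ℤ) - (κ : ℤ) := by
  obtain ⟨k, hk⟩ := hodd
  dsimp only [gdform]
  split_ifs with h1 h2 h3 <;> first | rfl | (exfalso; omega)

lemma gdform_neg {κ : ℕ} (hκ : 3 ≤ κ) (hodd : Odd κ) (X : V → ZMod κ) (u v : V) :
    gdform κ X u v = - gdform κ X v u := by
  haveI : NeZero κ := ⟨by omega⟩
  obtain ⟨k, hk⟩ := hodd
  rw [gdform_odd ⟨k, hk⟩, gdform_odd ⟨k, hk⟩]
  by_cases h : X u = X v
  · rw [h, sub_self]
    simp [ZMod.val_zero]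
    omega
  · set d1 := (X v - X u).val with hd1
    set d2 := (X u - X v).val with hd2
    have hne1 : X v - X u ≠ 0 := sub_ne_zero.mpr (Ne.symm h)
    have hne2 : X u - X v ≠ 0 := sub_ne_zero.mpr h
    have hv1 : d1 ≠ 0 := fun hc => hne1 ((ZMod.val_eq_zero _).mp hc)
    have hv2 : d2 ≠ 0 := fun hc => hne2 ((ZMod.val_eq_zero _).mp hc)
    have hl1 : d1 < κ := ZMod.val_lt _
    have hl2 : d2 < κ := ZMod.val_lt _
    have hsum : d1 + d2 = κ := by
      have h0 : (X v - X u) + (X u - X v) = 0 := by ring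
      have hval : ((X v - X u) + (X u - X v)).val = (d1 + d2) % κ := ZMod.val_add _ _
      rw [h0, ZMod.val_zero] at hval
      have hdvd : κ ∣ d1 + d2 := Nat.dvd_of_mod_eq_zero hval.symm
      obtain ⟨c, hc⟩ := hdvd
      rcases c with _ | _ | c
      · simp at hc; omega
      · rw [Nat.mul_one] at hc; omega
      · have h6 := Nat.mul_le_mul_left κ (show 2 ≤ c + 1 + 1 by omega)
        rw [Nat.mul_comm κ 2] at h6
        omega
    split_ifs with h1 h2 h2 <;> omega

end FCAProof

namespace FCAProof

lemma core {G : SimpleGraph V} (hdeg : ∀ v : V, (G.neighborSet v).encard ≤ 2)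
    {κ m : ℕ} (hm : κ = 2 * m + 1) (hm1 : 1 ≤ m) {X : ℕ → V → ZMod κ}
    (hstep : ∀ n, X (n + 1) = gstep κ G (X n))
    {t : ℕ} (ht : m ≤ t) {u v : V} (huv : G.Adj u v)
    (hu : X (t + 1) u = X t u)
    (hd : (X t v - X t u).val = m) : False := by
  haveI : NeZero κ := ⟨by omega⟩
  have hκ2 : 2 ≤ κ := by omega
  have hblink : blink κ = m := by unfold blink; omega
  obtain ⟨ha1, w, huw, hw⟩ := stay_hold hκ2 hstep hu
  rw [hblink] at ha1 hw
  set a := (X t u).val with haa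
  have ha2 : a < κ := ZMod.val_lt _
  have hXv : (X t v).val = a - (m + 1) := by
    have he : X t v = X t u + (X t v - X t u) := by ring
    have hval : (X t v).val = (a + m) % κ := by
      rw [he, ZMod.val_add, hd]
    rw [hval, Nat.mod_eq_sub_mod (by omega), Nat.mod_eq_of_lt (by omega)]
    omega
  have hwv : w ≠ v := by
    intro h; rw [h, hXv] at hw; omega
  have chain : ∀ s : ℕ, s + (m + 1) ≤ a → s ≤ t →
      X (t - s) u = X t u - (s : ZMod κ) ∧ X (t - s) v = X t v - (s : ZMod κ) := by
    intro s
    induction s with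
    | zero => intro _ _; simp
    | succ s ih =>
      intro h1 h2
      obtain ⟨ihu, ihv⟩ := ih (by omega) (by omega)
      have hr : t - s = (t - (s + 1)) + 1 := by omega
      set r := t - (s + 1) with hrdef
      have hu1 : (X (t - s) u).val = a - s := by
        rw [ihu, zval_sub _ _ (by omega)]
      have hv1 : (X (t - s) v).val = a - (m + 1) - s := by
        rw [ihv, zval_sub _ _ (by rw [hXv]; omega), hXv]
      have hvr : X r v = X t v - ((s + 1 : ℕ) : ZMod κ) := by
        rcases step_or hstep r v with hst | hmv
        · exfalso
          have hh := (stay_hold hκ2 hstep hst).1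
          rw [← hr] at hst
          rw [hblink, ← hst, hv1] at hh
          omega
        · rw [← hr] at hmv
          have h5 : X r v = X (t - s) v - 1 := by rw [hmv]; ring
          rw [h5, ihv]
          push_cast
          ring
      rcases step_or hstep r u with hst | hmv
      · exfalso
        obtain ⟨-, w', huw', hw'⟩ := stay_hold hκ2 hstep hst
        rw [hblink] at hw'
        have hw'v : w' ≠ v := by
          intro h
          rw [h, hvr, zval_sub _ _ (by rw [hXv]; omega), hXv] at hw'
          omega
        have hww : w' = w := nbr_unique hdeg huv huw' huw hw'v hwv
        rw [hww] at hw'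
        have := blink_return hκ2 hstep (show r < t by omega)
          (by rw [hblink]; exact hw') (by rw [hblink]; exact hw)
        omega
      · rw [← hr] at hmv
        refine ⟨?_, hvr⟩
        have h5 : X r u = X (t - s) u - 1 := by rw [hmv]; ring
        rw [h5, ihu]; push_cast; ring
  set s0 := a - (m + 1) with hs0
  have hs0m : s0 ≤ m - 1 := by omega
  obtain ⟨cu, cv⟩ := chain s0 (by omega) (by omega)
  have hu1 : (X (t - s0) u).val = m + 1 := by
    rw [cu, zval_sub _ _ (by omega)]; omega
  have hv1 : (X (t - s0) v).val = 0 := by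
    rw [cv, zval_sub _ _ (by rw [hXv]; try omega)]
    rw [hXv]
    all_goals omega
  have hr : t - s0 = (t - (s0 + 1)) + 1 := by omega
  set r := t - (s0 + 1) with hrdef
  have hvm : X (t - s0) v = X r v + 1 := by
    rcases step_or hstep r v with hst | hmv
    · exfalso
      have hh := (stay_hold hκ2 hstep hst).1
      rw [← hr] at hst
      rw [hblink, ← hst, hv1] at hh
      omega
    · rw [← hr] at hmv; exact hmv
  have hrv : (X r v).val = 2 * m := by
    have h0 : X (t - s0) v = 0 := (ZMod.val_eq_zero _).mp hv1
    have hcast : ((κ - 1 : ℕ) : ZMod κ) + 1 = 0 := by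
      rw [show (1 : ZMod κ) = ((1 : ℕ) : ZMod κ) by push_cast; ring, ← Nat.cast_add,
        Nat.sub_add_cancel (by omega), ZMod.natCast_self]
    have h2 : X r v + 1 = 0 := by rw [← hvm, h0]
    have e1 := eq_sub_of_add_eq h2
    have e2 := eq_sub_of_add_eq hcast
    rw [e1.trans e2.symm, ZMod.val_cast_of_lt (by omega)]
    omega
  rcases step_or hstep r u with hst | hmv2
  · obtain ⟨-, w', huw', hw'⟩ := stay_hold hκ2 hstep hst
    rw [hblink] at hw'
    have hw'v : w' ≠ v := by intro h; rw [h, hrv] at hw'; omega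
    have hww : w' = w := nbr_unique hdeg huv huw' huw hw'v hwv
    rw [hww] at hw'
    have := blink_return hκ2 hstep (show r < t by omega)
      (by rw [hblink]; exact hw') (by rw [hblink]; exact hw)
    omega
  · rw [← hr] at hmv2
    have hru : (X r u).val = m := by
      have h6 : X r u = X t u - ((s0 + 1 : ℕ) : ZMod κ) := by
        have h5 : X r u = X (t - s0) u - 1 := by rw [hmv2]; ring
        rw [h5, cu]; push_cast; ring
      rw [h6, zval_sub _ _ (by omega)]
      omega
    have hhold := hold_eq hstep (t := r) (v := v) (by rw [hblink, hrv]; omega)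
      ⟨u, huv.symm, by rw [hblink]; exact hru⟩
    have hcontra : X r v + 1 = X r v := by
      rw [← hvm, hr]; exact hhold
    exact add_one_ne hκ2 _ hcontra

end FCAProof

namespace FCAProof

lemma posneg {G : SimpleGraph V} (hdeg : ∀ v : V, (G.neighborSet v).encard ≤ 2)
    {κ m : ℕ} (hm : κ = 2 * m + 1) (hm1 : 1 ≤ m) {X : ℕ → V → ZMod κ}
    (hstep : ∀ n, X (n + 1) = gstep κ G (X n))
    {t : ℕ} (ht : m ≤ t) {u v : V} (huv : G.Adj u v)
    (h1 : 0 < gdform κ (X t) u v) (h2 : gdform κ (X (t + 1)) u v < 0) : False := by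
  haveI : NeZero κ := ⟨by omega⟩
  have hodd : Odd κ := ⟨m, by omega⟩
  rw [gdform_odd hodd] at h1 h2
  set d := X t v - X t u with hdd
  set d' := X (t + 1) v - X (t + 1) u with hdd'
  have hdlt := ZMod.val_lt d
  have hdlt' := ZMod.val_lt d'
  have hd1 : 0 < d.val ∧ 2 * d.val < κ := by
    split_ifs at h1 with hc1
    · exact ⟨by exact_mod_cast h1, hc1⟩
    · exfalso; omega
  have hd2 : κ ≤ 2 * d'.val := by
    split_ifs at h2 with hc2
    · exfalso; omega
    · omega
  have hone : (1 : ZMod κ).val = 1 := by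
    have := ZMod.val_one_eq_one_mod κ
    rwa [Nat.mod_eq_of_lt (by omega)] at this
  rcases step_or hstep t u with hsu | hsu <;> rcases step_or hstep t v with hsv | hsv
  · have he : d' = d := by rw [hdd, hdd', hsu, hsv]
    rw [he] at hd2; omega
  · -- u stays, v moves
    have he : d' = d + 1 := by rw [hdd, hdd', hsu, hsv]; ring
    have hval : d'.val = d.val + 1 := by
      rw [he, ZMod.val_add, hone, Nat.mod_eq_of_lt (by omega)]
    have hdm : d.val = m := by omega
    exact core hdeg hm hm1 hstep ht huv hsu hdm
  · -- u moves, v stays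
    have he : d' = d - 1 := by rw [hdd, hdd', hsu, hsv]; ring
    have hval : d'.val = d.val - 1 := by
      rw [he, show (1 : ZMod κ) = ((1 : ℕ) : ZMod κ) by push_cast; ring,
        zval_sub _ _ (by omega)]
    omega
  · have he : d' = d := by rw [hdd, hdd', hsu, hsv]; ring
    rw [he] at hd2; omega

end FCAProof

/-- On a simple connected graph with maximum degree ≤ 2, for odd κ ≥ 3,
no edge of the κ-color FCA flips at any time `t ≥ ⌊κ/2⌋`. -/
theorem fca_no_flipping_odd {V : Type*} (G : SimpleGraph V)
    (hconn : G.Connected) (hdeg : ∀ v : V, (G.neighborSet v).encard ≤ 2)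
    (κ : ℕ) (hκ : 3 ≤ κ) (hodd : Odd κ) (X0 : V → ZMod κ) :
    ∀ t : ℕ, κ / 2 ≤ t → ∀ u v : V, G.Adj u v → ¬ gflips κ G X0 t u v := by
  intro t ht u v hadj hflip
  obtain ⟨m, hm⟩ := hodd
  have hm' : κ = 2 * m + 1 := by omega
  have hm1 : 1 ≤ m := by omega
  have hstep : ∀ n, gtraj κ G X0 (n + 1) = gstep κ G (gtraj κ G X0 n) := fun _ => rfl
  have ht' : m ≤ t := by omega
  rcases hflip with ⟨h1, h2⟩ | ⟨h1, h2⟩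
  · exact FCAProof.posneg hdeg hm' hm1 hstep ht' hadj h1 h2
  · rw [FCAProof.gdform_neg hκ ⟨m, hm⟩] at h1 h2
    exact FCAProof.posneg hdeg hm' hm1 hstep ht' hadj.symm (by linarith) (by linarith)
end
end

section
/- Let 𝚇_1, 𝚇_2, … be i.i.d. integer-valued random variables with E[𝚇_1] = 0 and E[𝚇_1²] ∈ (0,∞), and for an integer x ≥ 0 let S_0 = x and S_n = S_{n−1} + 𝚇_n. Define the survival probabilities Q(x,t) = P(S_1 ≥ 0, S_2 ≥ 0, …, S_t ≥ 0 | S_0 = x) and the generating functions Q̃_x(u) = Σ_{t≥0} u^t Q(x,t). Then for every integer x ≥ 0 and every u ∈ [0,1): Q̃_x(u) ≤ (x+1)·Q̃_0(u). -/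
/-!
If the walk started at `x + 1` stays nonnegative up to time `t` but the walk started at `x` does
not, then the walk started at `0` hits `-(x + 1)` for the first time at some `s ≤ t` and never goes
below that level afterwards up to time `t`. The first event is determined by `X 1, …, X s`; the
second one by the later increments, and by stationarity it has probability `Q(0, t - s)`. Hence
`Q(x + 1, t) ≤ Q(x, t) + ∑ₛ P(first passage at s) Q(0, t - s)`. On generating functions the
convolution becomes a product, and the first-passage probabilities add up to at most one, so
`Q̃_{x+1} ≤ Q̃_x + Q̃_0`; induction on `x` concludes.
-/

open MeasureTheory ProbabilityTheory Finset
open scoped ENNReal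

noncomputable section

theorem ENNReal.tsum_mul_tsum_eq_tsum_sum_range (f g : ℕ → ℝ≥0∞) :
    (∑' n, f n) * ∑' n, g n = ∑' n, ∑ k ∈ range (n + 1), f k * g (n - k) := by
  simp_rw [← Nat.sum_antidiagonal_eq_sum_range_succ fun k l => f k * g l, ← ENNReal.tsum_mul_right,
    ← ENNReal.tsum_mul_left, ← ENNReal.tsum_prod,
    ← HasAntidiagonal.sigmaAntidiagonalEquivProd.tsum_eq (fun p : ℕ × ℕ => f p.1 * g p.2),
    ENNReal.tsum_sigma']
  exact tsum_congr fun n => Finset.tsum_subtype (antidiagonal n) fun p => f p.1 * g p.2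

namespace RandomWalk

theorem sum_Icc_one_add {M : Type*} [AddCommMonoid M] (y : ℕ → M) (s m : ℕ) :
    ∑ i ∈ Icc 1 (s + m), y i = ∑ i ∈ Icc 1 s, y i + ∑ i ∈ Icc 1 m, y (s + i) := by
  induction m with
  | zero => simp
  | succ m ih =>
    rw [← add_assoc, sum_Icc_succ_top (by omega), sum_Icc_succ_top (by omega), ih, add_assoc]
    rfl

def Survives (x : ℤ) (t : ℕ) (y : ℕ → ℤ) : Prop :=
  ∀ n ∈ Icc 1 t, 0 ≤ x + ∑ i ∈ Icc 1 n, y i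

def FirstPassage (a : ℤ) (s : ℕ) (y : ℕ → ℤ) : Prop :=
  (∀ n ∈ Ico 1 s, a < ∑ i ∈ Icc 1 n, y i) ∧ ∑ i ∈ Icc 1 s, y i = a

theorem FirstPassage.eq {a : ℤ} (ha : a ≠ 0) {s s' : ℕ} {y : ℕ → ℤ}
    (h : FirstPassage a s y) (h' : FirstPassage a s' y) : s = s' := by
  have pos : ∀ {s}, FirstPassage a s y → 1 ≤ s := fun {s} h => by
    by_contra! hs
    obtain rfl : s = 0 := by omega
    exact ha (by simpa using h.2.symm)
  by_contra hne
  rcases Nat.lt_or_gt_of_ne hne with hlt | hlt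
  · exact (h'.1 s (mem_Ico.2 ⟨pos h, hlt⟩)).ne' h.2
  · exact (h.1 s' (mem_Ico.2 ⟨pos h', hlt⟩)).ne' h'.2

theorem Survives.of_succ {x : ℤ} {t : ℕ} {y : ℕ → ℤ} (h : Survives (x + 1) t y) :
    Survives x t y ∨ ∃ s ∈ range (t + 1),
      FirstPassage (-(x + 1)) s y ∧ Survives 0 (t - s) (fun i => y (s + i)) := by
  by_cases hx : Survives x t y
  · exact .inl hx
  right
  have hex : ∃ n, n ∈ Icc 1 t ∧ ∑ i ∈ Icc 1 n, y i = -(x + 1) := by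
    simp only [Survives, not_forall, not_le] at hx
    obtain ⟨n, hn, hlt⟩ := hx
    exact ⟨n, hn, by linarith [h n hn]⟩
  obtain ⟨s, ⟨hs, hsa⟩, hmin⟩ : ∃ s, (s ∈ Icc 1 t ∧ ∑ i ∈ Icc 1 s, y i = -(x + 1)) ∧
      ∀ n < s, ¬ (n ∈ Icc 1 t ∧ ∑ i ∈ Icc 1 n, y i = -(x + 1)) :=
    ⟨Nat.find hex, Nat.find_spec hex, fun n => Nat.find_min hex⟩
  rw [mem_Icc] at hs
  refine ⟨s, mem_range.2 (by omega), ⟨fun n hn => ?_, hsa⟩, fun m hm => ?_⟩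
  · rw [mem_Ico] at hn
    have hnt : n ∈ Icc 1 t := mem_Icc.2 ⟨hn.1, by omega⟩
    have hne := hmin n hn.2
    have := h n hnt
    simp only [hnt, true_and] at hne
    omega
  · rw [mem_Icc] at hm
    have := h (s + m) (mem_Icc.2 ⟨by omega, by omega⟩)
    rw [sum_Icc_one_add, hsa] at this
    linarith

theorem measurableSet_setOf_forall_mem {Ω ι β : Type*} {m : MeasurableSpace Ω} [MeasurableSpace β]
    [DiscreteMeasurableSpace β] {F : Finset ι} {g : ι → Ω → β}
    (hg : ∀ n ∈ F, Measurable[m] (g n)) (p : ι → β → Prop) :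
    MeasurableSet[m] {ω | ∀ n ∈ F, p n (g n ω)} := by
  have : {ω | ∀ n ∈ F, p n (g n ω)} = ⋂ n ∈ F, g n ⁻¹' {z | p n z} := by ext; simp
  rw [this]
  exact .biInter F.countable_toSet fun n hn => hg n hn .of_discrete

theorem measurableSet_survives (x : ℤ) (t : ℕ) : MeasurableSet {y : ℕ → ℤ | Survives x t y} :=
  measurableSet_setOf_forall_mem (g := fun n (y : ℕ → ℤ) => x + ∑ i ∈ Icc 1 n, y i)
    (fun _ _ => measurable_const.add (Finset.measurable_sum _ fun i _ => measurable_pi_apply i)) _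

section Increments

variable {Ω : Type*} {X : ℕ → Ω → ℤ}

abbrev incrementSigma (X : ℕ → Ω → ℤ) (I : Set ℕ) : MeasurableSpace Ω :=
  ⨆ i ∈ I, MeasurableSpace.comap (X i) inferInstance

theorem measurable_incrementSigma {I : Set ℕ} {i : ℕ} (hi : i ∈ I) :
    Measurable[incrementSigma X I] (X i) :=
  measurable_iff_comap_le.2
    (le_iSup₂ (f := fun j (_ : j ∈ I) => MeasurableSpace.comap (X j) _) i hi)

theorem measurableSet_firstPassage (a : ℤ) (s : ℕ) :
    MeasurableSet[incrementSigma X (Set.Iic s)] {ω | FirstPassage a s (X · ω)} := by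
  have hsum : ∀ n ≤ s, Measurable[incrementSigma X (Set.Iic s)] fun ω => ∑ i ∈ Icc 1 n, X i ω :=
    fun n hn => Finset.measurable_sum _ fun i hi =>
      measurable_incrementSigma (Set.mem_Iic.2 ((mem_Icc.1 hi).2.trans hn))
  exact (measurableSet_setOf_forall_mem (fun n hn => hsum n (mem_Ico.1 hn).2.le) _).inter
    (hsum s le_rfl (measurableSet_singleton a))

theorem measurableSet_survives_shift (x : ℤ) (s t : ℕ) :
    MeasurableSet[incrementSigma X (Set.Ioi s)] {ω | Survives x t (fun i => X (s + i) ω)} :=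
  measurableSet_setOf_forall_mem (fun _ _ => measurable_const.add
    (Finset.measurable_sum _ fun _ hi => measurable_incrementSigma
      (Set.mem_Ioi.2 (Nat.lt_add_of_pos_right (mem_Icc.1 hi).1)))) _

variable [MeasurableSpace Ω] {μ : Measure Ω}

theorem measure_firstPassage_inter_survives_shift (hmeas : ∀ n, Measurable (X n))
    (hindep : iIndepFun X μ) (a x : ℤ) (s t : ℕ) :
    μ ({ω | FirstPassage a s (X · ω)} ∩ {ω | Survives x t (fun i => X (s + i) ω)}) =
      μ {ω | FirstPassage a s (X · ω)} * μ {ω | Survives x t (fun i => X (s + i) ω)} :=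
  (Indep_iff _ _ μ).1 (indep_iSup_of_disjoint (fun i => (hmeas i).comap_le) hindep
    (Set.Iic_disjoint_Ioi le_rfl)) _ _ (measurableSet_firstPassage a s)
    (measurableSet_survives_shift x s t)

theorem map_shift_eq_infinitePi (hmeas : ∀ n, Measurable (X n)) (hindep : iIndepFun X μ)
    (hident : ∀ n, IdentDistrib (X n) (X 1) μ μ) (s : ℕ) :
    μ.map (fun ω i => X (s + i) ω) = Measure.infinitePi fun _ => μ.map (X 1) := by
  rw [(hindep.precomp (add_right_injective s)).map_fun_eq_infinitePi_map fun i => hmeas _]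
  simp_rw [(hident _).map_eq]

theorem measure_survives_shift (hmeas : ∀ n, Measurable (X n)) (hindep : iIndepFun X μ)
    (hident : ∀ n, IdentDistrib (X n) (X 1) μ μ) (x : ℤ) (s t : ℕ) :
    μ {ω | Survives x t (fun i => X (s + i) ω)} = μ {ω | Survives x t (X · ω)} := by
  have hshift : ∀ s, Measurable fun ω i => X (s + i) ω :=
    fun s => measurable_pi_lambda _ fun i => hmeas _
  have h := congrArg (· {y | Survives x t y})
    ((map_shift_eq_infinitePi hmeas hindep hident s).trans
      (map_shift_eq_infinitePi hmeas hindep hident 0).symm)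
  simp only [Measure.map_apply (hshift _) (measurableSet_survives x t)] at h
  simp only [zero_add] at h
  exact h

theorem tsum_measure_firstPassage_le_one [IsProbabilityMeasure μ] (hmeas : ∀ n, Measurable (X n))
    {a : ℤ} (ha : a ≠ 0) : ∑' s, μ {ω | FirstPassage a s (X · ω)} ≤ 1 :=
  (tsum_meas_le_meas_iUnion_of_disjoint μ
    (fun s => iSup₂_le (fun i _ => (hmeas i).comap_le) _ (measurableSet_firstPassage a s))
    fun _ _ hne => Set.disjoint_left.2 fun _ h h' => hne (h.eq ha h')).trans prob_le_one

theorem measure_survives_succ_le (hmeas : ∀ n, Measurable (X n))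
    (hindep : iIndepFun X μ) (hident : ∀ n, IdentDistrib (X n) (X 1) μ μ) (x : ℤ) (t : ℕ) :
    μ {ω | Survives (x + 1) t (X · ω)} ≤ μ {ω | Survives x t (X · ω)} +
      ∑ s ∈ range (t + 1), μ {ω | FirstPassage (-(x + 1)) s (X · ω)} *
        μ {ω | Survives 0 (t - s) (X · ω)} := by
  calc μ {ω | Survives (x + 1) t (X · ω)}
      ≤ μ ({ω | Survives x t (X · ω)} ∪ ⋃ s ∈ range (t + 1),
          {ω | FirstPassage (-(x + 1)) s (X · ω)} ∩
            {ω | Survives 0 (t - s) (fun i => X (s + i) ω)}) :=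
        measure_mono fun ω h => (Survives.of_succ h).imp id
          fun ⟨s, hs, hA, hC⟩ => Set.mem_biUnion hs ⟨hA, hC⟩
    _ ≤ μ {ω | Survives x t (X · ω)} + ∑ s ∈ range (t + 1),
          μ ({ω | FirstPassage (-(x + 1)) s (X · ω)} ∩
            {ω | Survives 0 (t - s) (fun i => X (s + i) ω)}) :=
        (measure_union_le _ _).trans (add_le_add_right (measure_biUnion_finset_le _ _) _)
    _ = _ := by
        simp_rw [measure_firstPassage_inter_survives_shift hmeas hindep,
          measure_survives_shift hmeas hindep hident]

/-- `Q̃_x(v)`, summed in `ℝ≥0∞` so that no summability has to be tracked. -/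
def survivalGF (μ : Measure Ω) (X : ℕ → Ω → ℤ) (x : ℤ) (v : ℝ≥0∞) : ℝ≥0∞ :=
  ∑' t, v ^ t * μ {ω | Survives x t (X · ω)}

theorem survivalGF_succ_le [IsProbabilityMeasure μ] (hmeas : ∀ n, Measurable (X n))
    (hindep : iIndepFun X μ) (hident : ∀ n, IdentDistrib (X n) (X 1) μ μ) {x : ℤ}
    (hx : 0 ≤ x) {v : ℝ≥0∞} (hv : v ≤ 1) :
    survivalGF μ X (x + 1) v ≤ survivalGF μ X x v + survivalGF μ X 0 v := by
  set A := fun s => μ {ω | FirstPassage (-(x + 1)) s (X · ω)}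
  set q := fun r => μ {ω | Survives 0 r (X · ω)}
  have hA : ∑' s, v ^ s * A s ≤ 1 :=
    (ENNReal.tsum_le_tsum fun s => mul_le_of_le_one_left' (pow_le_one' hv s)).trans
      (tsum_measure_firstPassage_le_one hmeas (by omega))
  calc survivalGF μ X (x + 1) v
      ≤ ∑' t, v ^ t * (μ {ω | Survives x t (X · ω)} +
          ∑ s ∈ range (t + 1), A s * q (t - s)) :=
        ENNReal.tsum_le_tsum fun t =>
          mul_le_mul_right (measure_survives_succ_le hmeas hindep hident x t) _
    _ = survivalGF μ X x v +
          ∑' t, ∑ s ∈ range (t + 1), (v ^ s * A s) * (v ^ (t - s) * q (t - s)) := by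
        rw [survivalGF, ← ENNReal.tsum_add]
        refine tsum_congr fun t => ?_
        rw [mul_add, mul_sum]
        congr 1
        refine sum_congr rfl fun s hs => ?_
        rw [← pow_sub_mul_pow v (Nat.le_of_lt_succ (mem_range.1 hs))]
        ring
    _ = survivalGF μ X x v + (∑' s, v ^ s * A s) * survivalGF μ X 0 v := by
        rw [← ENNReal.tsum_mul_tsum_eq_tsum_sum_range (fun s => v ^ s * A s) fun r => v ^ r * q r]
        rfl
    _ ≤ survivalGF μ X x v + survivalGF μ X 0 v := by
        gcongr
        exact mul_le_of_le_one_left' hA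

theorem survivalGF_le [IsProbabilityMeasure μ] (hmeas : ∀ n, Measurable (X n))
    (hindep : iIndepFun X μ) (hident : ∀ n, IdentDistrib (X n) (X 1) μ μ) (x : ℕ)
    {v : ℝ≥0∞} (hv : v ≤ 1) :
    survivalGF μ X x v ≤ (x + 1) * survivalGF μ X 0 v := by
  induction x with
  | zero => simp
  | succ x ih =>
    calc survivalGF μ X ((x + 1 : ℕ) : ℤ) v
        ≤ survivalGF μ X x v + survivalGF μ X 0 v := by
          exact_mod_cast survivalGF_succ_le hmeas hindep hident (Int.natCast_nonneg x) hv
      _ ≤ ((x + 1 : ℕ) + 1) * survivalGF μ X 0 v := by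
          push_cast
          rw [add_mul _ 1, one_mul]
          gcongr

theorem survivalGF_ne_top [IsProbabilityMeasure μ] (x : ℤ) {v : ℝ≥0∞} (hv : v < 1) :
    survivalGF μ X x v ≠ ∞ :=
  ne_top_of_le_ne_top (ENNReal.tsum_geometric v ▸ ENNReal.inv_ne_top.2 (tsub_pos_of_lt hv).ne')
    (ENNReal.tsum_le_tsum fun _ => mul_le_of_le_one_right' prob_le_one)

theorem survivalGF_toReal [IsFiniteMeasure μ] (x : ℤ) {u : ℝ} (hu : 0 ≤ u) :
    (survivalGF μ X x (ENNReal.ofReal u)).toReal =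
      ∑' t, u ^ t * (μ {ω | Survives x t (X · ω)}).toReal := by
  rw [survivalGF, ENNReal.tsum_toReal_eq fun t => ENNReal.mul_ne_top (by simp) (measure_ne_top _ _)]
  simp only [ENNReal.toReal_mul, ENNReal.toReal_pow, ENNReal.toReal_ofReal hu]

end Increments

end RandomWalk

end

open RandomWalk

theorem survival_generating_function_bound_general
    {Ω : Type*} [MeasurableSpace Ω] (μ : Measure Ω) [IsProbabilityMeasure μ]
    (X : ℕ → Ω → ℤ) (hmeas : ∀ n, Measurable (X n))
    (hindep : iIndepFun X μ)
    (hident : ∀ n, IdentDistrib (X n) (X 1) μ μ) :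
    ∀ (x : ℕ) (u : ℝ), 0 ≤ u → u < 1 →
      (∑' t : ℕ, u ^ t *
          (μ {ω | ∀ n ∈ Finset.Icc 1 t,
            0 ≤ (x : ℤ) + ∑ i ∈ Finset.Icc 1 n, X i ω}).toReal) ≤
        ((x : ℝ) + 1) *
          ∑' t : ℕ, u ^ t *
            (μ {ω | ∀ n ∈ Finset.Icc 1 t, 0 ≤ ∑ i ∈ Finset.Icc 1 n, X i ω}).toReal := by
  intro x u hu hu1
  have hv : ENNReal.ofReal u < 1 := ENNReal.ofReal_lt_one.2 hu1
  calc ∑' t, u ^ t * (μ {ω | Survives x t (X · ω)}).toReal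
      = (survivalGF μ X x (ENNReal.ofReal u)).toReal := (survivalGF_toReal x hu).symm
    _ ≤ ((x + 1) * survivalGF μ X 0 (ENNReal.ofReal u)).toReal :=
        ENNReal.toReal_mono (ENNReal.mul_ne_top (by simp) (survivalGF_ne_top 0 hv))
          (survivalGF_le hmeas hindep hident x hv.le)
    _ = (x + 1) * ∑' t, u ^ t * (μ {ω | Survives 0 t (X · ω)}).toReal := by
        rw [ENNReal.toReal_mul, survivalGF_toReal 0 hu]
        norm_cast
    _ = _ := by simp only [Survives, zero_add]

/-- For a random walk `S_n = x + 𝚇_1 + ⋯ + 𝚇_n` with i.i.d. integer-valued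
increments of mean zero and finite positive second moment, the generating functions
`Q̃_x(u) = Σ_t u^t Q(x,t)` of the survival probabilities
`Q(x,t) = P(S_1 ≥ 0, …, S_t ≥ 0)` satisfy `Q̃_x(u) ≤ (x+1)·Q̃_0(u)` for every integer
`x ≥ 0` and every `u ∈ [0,1)`. -/
theorem survival_generating_function_bound
    {Ω : Type*} [MeasurableSpace Ω] (μ : Measure Ω) [IsProbabilityMeasure μ]
    (X : ℕ → Ω → ℤ) (hmeas : ∀ n, Measurable (X n))
    (hindep : iIndepFun X μ)
    (hident : ∀ n, IdentDistrib (X n) (X 1) μ μ)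
    (hmean : ∫ ω, ((X 1 ω : ℝ)) ∂μ = 0)
    (hL2 : Integrable (fun ω => ((X 1 ω : ℝ)) ^ 2) μ)
    (hpos : 0 < ∫ ω, ((X 1 ω : ℝ)) ^ 2 ∂μ) :
    ∀ (x : ℕ) (u : ℝ), 0 ≤ u → u < 1 →
      (∑' t : ℕ, u ^ t *
          (μ {ω | ∀ n ∈ Finset.Icc 1 t,
            0 ≤ (x : ℤ) + ∑ i ∈ Finset.Icc 1 n, X i ω}).toReal) ≤
        ((x : ℝ) + 1) *
          ∑' t : ℕ, u ^ t *
            (μ {ω | ∀ n ∈ Finset.Icc 1 t, 0 ≤ ∑ i ∈ Finset.Icc 1 n, X i ω}).toReal :=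
  survival_generating_function_bound_general μ X hmeas hindep hident
end

section
/- Let κ = 3. For every configuration X_0 : ℤ → ℤ/3ℤ, every integer x', and every n ≥ 0, the walks S'_n and 𝒮_n defined from X_0 with starting value x' satisfy 𝒮_n = S'_n + 1{X⃗_0(n) = (1,2,0)} − 2·1{X⃗_0(n) = (0,2,1)}. -/
noncomputable section

namespace FCA3

/-- The representative of an element of `ℤ/3ℤ` in `{-1, 0, 1}`. -/
def rep3 (a : ZMod 3) : ℤ := if a = 0 then 0 else if a = 1 then 1 else -1

/-- The triple of colors around site `x`. -/
def vec (X : ℤ → ZMod 3) (x : ℤ) : ZMod 3 × ZMod 3 × ZMod 3 := (X (x - 1), X x, X (x + 1))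

/-- The modified configuration `X₀'`, in which every flipping triple `120` or `021`
centered at `x` is replaced by color `1` at `x`. -/
def modify (X : ℤ → ZMod 3) : ℤ → ZMod 3 := fun x =>
  if vec X x = ((1 : ZMod 3), (2 : ZMod 3), (0 : ZMod 3)) ∨
     vec X x = ((0 : ZMod 3), (2 : ZMod 3), (1 : ZMod 3)) then 1 else X x

/-- The functional `g : (ℤ/3ℤ)³ → {-2,…,2}`, with `g(1,2,0) = -2`, `g(0,2,1) = 2`, and
otherwise the representative of `k - j (mod 3)` in `{-1,0,1}`. -/
def g3 : ZMod 3 × ZMod 3 × ZMod 3 → ℤ := fun p =>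
  if p = ((1 : ZMod 3), (2 : ZMod 3), (0 : ZMod 3)) then -2
  else if p = ((0 : ZMod 3), (2 : ZMod 3), (1 : ZMod 3)) then 2
  else rep3 (p.2.2 - p.2.1)

/-- The walk `S'_n = x' + Σ_{i=0}^{n-1} dX₀'(i, i+1)`. -/
def S' (X : ℤ → ZMod 3) (x' : ℤ) (n : ℕ) : ℤ :=
  x' + ∑ i ∈ Finset.range n, rep3 (modify X ((i : ℤ) + 1) - modify X (i : ℤ))

/-- The starting value `𝒮₀ = x' + 1{X⃗₀(0) = (1,2,0)} - 2·1{X⃗₀(0) = (0,2,1)}`. -/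
def S0 (X : ℤ → ZMod 3) (x' : ℤ) : ℤ :=
  x' + (if vec X 0 = ((1 : ZMod 3), (2 : ZMod 3), (0 : ZMod 3)) then 1 else 0) -
    (if vec X 0 = ((0 : ZMod 3), (2 : ZMod 3), (1 : ZMod 3)) then 2 else 0)

/-- The walk `𝒮_n = 𝒮₀ + Σ_{i=0}^{n-1} g(X⃗₀(i))`. -/
def Scal (X : ℤ → ZMod 3) (x' : ℤ) (n : ℕ) : ℤ :=
  S0 X x' + ∑ i ∈ Finset.range n, g3 (vec X (i : ℤ))

/-- The adjusted walk `𝒮'_n = 𝒮_n + 1{𝒮_n = -1 and X⃗₀(n) = (0,2,1)}`. -/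
def Scal' (X : ℤ → ZMod 3) (x' : ℤ) (n : ℕ) : ℤ :=
  Scal X x' n +
    (if Scal X x' n = -1 ∧ vec X (n : ℤ) = ((0 : ZMod 3), (2 : ZMod 3), (1 : ZMod 3))
     then 1 else 0)

end FCA3

open FCA3

/-!
Away from the flipping triples, `g` is the increment of `X₀'`. At a triple `120` or `021` the
centre of `X₀'` is moved to `1`, and `g` compensates for this: it is the increment of `X₀'` plus
the discrete gradient of the correction `c(p) = 1{p = 120} - 2·1{p = 021}`, a four-colour identity.
Summing, the gradient telescopes, so `𝒮_n - S'_n = c(X⃗₀(n))`; the start `𝒮₀ = x' + c(X⃗₀(0))` is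
chosen so that the constant term vanishes.
-/

namespace FCA3

def correction (p : ZMod 3 × ZMod 3 × ZMod 3) : ℤ :=
  (if p = ((1 : ZMod 3), (2 : ZMod 3), (0 : ZMod 3)) then 1 else 0) -
    (if p = ((0 : ZMod 3), (2 : ZMod 3), (1 : ZMod 3)) then 2 else 0)

def modifiedCenter (p : ZMod 3 × ZMod 3 × ZMod 3) : ZMod 3 :=
  if p = ((1 : ZMod 3), (2 : ZMod 3), (0 : ZMod 3)) ∨
     p = ((0 : ZMod 3), (2 : ZMod 3), (1 : ZMod 3)) then 1 else p.2.1

theorem modify_eq_modifiedCenter (X : ℤ → ZMod 3) (x : ℤ) :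
    modify X x = modifiedCenter (vec X x) := rfl

theorem g3_eq_rep3_add_correction_sub (a b c d : ZMod 3) :
    g3 (a, b, c) = rep3 (modifiedCenter (b, c, d) - modifiedCenter (a, b, c)) +
      (correction (b, c, d) - correction (a, b, c)) := by
  revert a b c d; decide

theorem g3_vec_eq_rep3_add_correction_sub (X : ℤ → ZMod 3) (x : ℤ) :
    g3 (vec X x) = rep3 (modify X (x + 1) - modify X x) +
      (correction (vec X (x + 1)) - correction (vec X x)) := by
  simp only [modify_eq_modifiedCenter, vec, add_sub_cancel_right]
  exact g3_eq_rep3_add_correction_sub _ _ _ _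

theorem Scal_eq_S'_add_correction (X : ℤ → ZMod 3) (x' : ℤ) (n : ℕ) :
    Scal X x' n = S' X x' n + correction (vec X n) := by
  have htelescope := Finset.sum_range_sub (fun i : ℕ => correction (vec X i)) n
  push_cast at htelescope
  simp only [Scal, S', S0, g3_vec_eq_rep3_add_correction_sub, Finset.sum_add_distrib, htelescope]
  unfold correction
  ring

end FCA3

/-- For κ = 3, the walks `S'` and `𝒮` satisfy
`𝒮_n = S'_n + 1{X⃗₀(n) = (1,2,0)} - 2·1{X⃗₀(n) = (0,2,1)}` for every configuration,
starting value, and `n ≥ 0`. -/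
theorem walk_comparison (X : ℤ → ZMod 3) (x' : ℤ) (n : ℕ) :
    Scal X x' n = S' X x' n +
      (if vec X (n : ℤ) = ((1 : ZMod 3), (2 : ZMod 3), (0 : ZMod 3)) then 1 else 0) -
      (if vec X (n : ℤ) = ((0 : ZMod 3), (2 : ZMod 3), (1 : ZMod 3)) then 2 else 0) := by
  rw [Scal_eq_S'_add_correction, correction, add_sub_assoc]
end
end

section
/- Let κ = 3. For every configuration X_0 : ℤ → ℤ/3ℤ, every integer x' ≥ 0, and every t ≥ 1, the walks S'_n and 𝒮'_n defined from X_0 with starting value x' satisfy: (S'_1 ≥ 0 and S'_2 ≥ 0 and … and S'_t ≥ 0) if and only if (𝒮'_1 ≥ 0 and 𝒮'_2 ≥ 0 and … and 𝒮'_t ≥ 0). -/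
noncomputable section

namespace FCA3

/-!
The walk `𝒮` differs from `S'` only by a local correction `C = flipCorrection`:
`𝒮_n = S'_n + C(X⃗₀(n))` with `C(1,2,0) = 1`, `C(0,2,1) = -2` and `C = 0` otherwise,
because `g` is the increment of `X₀'` plus the discrete derivative of `C`. At a site `120`
the walk `S'` does not move and `𝒮'` sits one above it; at a site `021` the walk `S'` has
just moved up, so `S' ≥ 1` and `𝒮 ≥ -1`, which the adjustment in `𝒮'` lifts to `0`.
Elsewhere `𝒮' = S'`. Hence, once `S'_{n-1} ≥ 0`, the two walks are nonnegative at time `n`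
simultaneously, and the survival events agree by induction on `t`.
-/

def flipRule (p : ZMod 3 × ZMod 3 × ZMod 3) : ZMod 3 :=
  if p = (1, 2, 0) ∨ p = (0, 2, 1) then 1 else p.2.1

def flipCorrection (p : ZMod 3 × ZMod 3 × ZMod 3) : ℤ :=
  (if p = (1, 2, 0) then 1 else 0) - (if p = (0, 2, 1) then 2 else 0)

theorem flipCorrection_120 : flipCorrection (1, 2, 0) = 1 := by decide

theorem flipCorrection_021 : flipCorrection (0, 2, 1) = -2 := by decide

theorem flipCorrection_of_ne {p : ZMod 3 × ZMod 3 × ZMod 3} (h120 : p ≠ (1, 2, 0))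
    (h021 : p ≠ (0, 2, 1)) : flipCorrection p = 0 := by
  rw [flipCorrection, if_neg h120, if_neg h021, sub_zero]

theorem g3_eq_rep3_add_flipCorrection_sub (a b c d : ZMod 3) :
    g3 (a, b, c) = rep3 (flipRule (b, c, d) - flipRule (a, b, c)) +
      flipCorrection (b, c, d) - flipCorrection (a, b, c) := by
  revert a b c d; decide

theorem rep3_flipRule_sub_of_120 (a : ZMod 3) :
    rep3 (flipRule (1, 2, 0) - flipRule (a, 1, 2)) = 0 := by
  revert a; decide

theorem rep3_flipRule_sub_of_021 (a : ZMod 3) :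
    rep3 (flipRule (0, 2, 1) - flipRule (a, 0, 2)) = 1 := by
  revert a; decide

section

variable (X : ℤ → ZMod 3)

theorem modify_apply (x : ℤ) : modify X x = flipRule (vec X x) := rfl

theorem vec_add_one (z : ℤ) : vec X (z + 1) = (X z, X (z + 1), X (z + 2)) := by
  simp only [vec, add_sub_cancel_right, add_assoc, one_add_one_eq_two]

theorem modify_add_one_sub (z : ℤ) : modify X (z + 1) - modify X z =
    flipRule (X z, X (z + 1), X (z + 2)) - flipRule (X (z - 1), X z, X (z + 1)) := by
  rw [modify_apply, modify_apply, vec_add_one]; rfl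

theorem g3_vec_eq (z : ℤ) :
    g3 (vec X z) = rep3 (modify X (z + 1) - modify X z) +
      flipCorrection (vec X (z + 1)) - flipCorrection (vec X z) := by
  rw [modify_add_one_sub, vec_add_one]
  exact g3_eq_rep3_add_flipCorrection_sub _ _ _ _

theorem rep3_modify_sub_of_vec_eq_120 {z : ℤ} (h : vec X (z + 1) = (1, 2, 0)) :
    rep3 (modify X (z + 1) - modify X z) = 0 := by
  rw [vec_add_one, Prod.mk.injEq, Prod.mk.injEq] at h
  rw [modify_add_one_sub, h.1, h.2.1, h.2.2]
  exact rep3_flipRule_sub_of_120 _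

theorem rep3_modify_sub_of_vec_eq_021 {z : ℤ} (h : vec X (z + 1) = (0, 2, 1)) :
    rep3 (modify X (z + 1) - modify X z) = 1 := by
  rw [vec_add_one, Prod.mk.injEq, Prod.mk.injEq] at h
  rw [modify_add_one_sub, h.1, h.2.1, h.2.2]
  exact rep3_flipRule_sub_of_021 _

variable (x' : ℤ)

theorem S'_zero : S' X x' 0 = x' := by simp [S']

theorem S'_succ (n : ℕ) :
    S' X x' (n + 1) = S' X x' n + rep3 (modify X ((n : ℤ) + 1) - modify X n) := by
  rw [S', S', Finset.sum_range_succ, add_assoc]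

theorem Scal_eq_S'_add_flipCorrection (n : ℕ) :
    Scal X x' n = S' X x' n + flipCorrection (vec X n) := by
  have htelescope := Finset.sum_range_sub (fun i : ℕ => flipCorrection (vec X i)) n
  push_cast at htelescope
  have hS0 : S0 X x' = x' + flipCorrection (vec X 0) := by
    rw [S0, flipCorrection, add_sub_assoc]
  rw [Scal, S', hS0]
  simp_rw [g3_vec_eq, add_sub_assoc, Finset.sum_add_distrib, htelescope]
  ring

theorem nonneg_S'_succ_iff_nonneg_Scal'_succ {n : ℕ} (hn : 0 ≤ S' X x' n) :
    0 ≤ S' X x' (n + 1) ↔ 0 ≤ Scal' X x' (n + 1) := by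
  have hScal := Scal_eq_S'_add_flipCorrection X x' (n + 1)
  have hstep := S'_succ X x' n
  rw [Scal']
  push_cast at hScal ⊢
  by_cases h120 : vec X ((n : ℤ) + 1) = (1, 2, 0)
  · rw [rep3_modify_sub_of_vec_eq_120 X h120] at hstep
    rw [h120, flipCorrection_120] at hScal
    rw [h120, if_neg fun h => absurd h.2 (by decide)]
    omega
  by_cases h021 : vec X ((n : ℤ) + 1) = (0, 2, 1)
  · rw [rep3_modify_sub_of_vec_eq_021 X h021] at hstep
    rw [h021, flipCorrection_021] at hScal
    simp only [h021, and_true]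
    split_ifs <;> omega
  · rw [flipCorrection_of_ne h120 h021] at hScal
    rw [if_neg fun h => h021 h.2]
    omega

end

end FCA3

theorem forall_mem_Icc_iff_of_step {P Q : ℕ → Prop} (h0 : P 0)
    (hstep : ∀ n, P n → (P (n + 1) ↔ Q (n + 1))) (t : ℕ) :
    (∀ n ∈ Finset.Icc 1 t, P n) ↔ (∀ n ∈ Finset.Icc 1 t, Q n) := by
  induction t with
  | zero => simp
  | succ t ih =>
    have hPt : (∀ n ∈ Finset.Icc 1 t, P n) → P t := fun hP =>
      t.eq_zero_or_pos.elim (fun ht => ht ▸ h0) fun ht => hP t (Finset.mem_Icc.2 ⟨ht, le_rfl⟩)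
    simp only [← Finset.insert_Icc_right_eq_Icc_add_one (Nat.le_add_left 1 t),
      Finset.forall_mem_insert]
    constructor
    · rintro ⟨hPs, hP⟩
      exact ⟨(hstep t (hPt hP)).1 hPs, ih.1 hP⟩
    · rintro ⟨hQs, hQ⟩
      have hP := ih.2 hQ
      exact ⟨(hstep t (hPt hP)).2 hQs, hP⟩

open FCA3

theorem walk_survival_equivalence_general (X : ℤ → ZMod 3) (x' : ℤ) (hx' : 0 ≤ x')
    (t : ℕ) :
    (∀ n ∈ Finset.Icc 1 t, 0 ≤ S' X x' n) ↔ (∀ n ∈ Finset.Icc 1 t, 0 ≤ Scal' X x' n) :=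
  forall_mem_Icc_iff_of_step ((S'_zero X x').symm ▸ hx')
    (fun _ => nonneg_S'_succ_iff_nonneg_Scal'_succ X x') t

/-- For κ = 3, starting value `x' ≥ 0` and `t ≥ 1`: the walk `S'`
stays nonnegative through the first `t` steps if and only if `𝒮'` does. -/
theorem walk_survival_equivalence (X : ℤ → ZMod 3) (x' : ℤ) (hx' : 0 ≤ x')
    (t : ℕ) (ht : 1 ≤ t) :
    (∀ n ∈ Finset.Icc 1 t, 0 ≤ S' X x' n) ↔ (∀ n ∈ Finset.Icc 1 t, 0 ≤ Scal' X x' n) :=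
  walk_survival_equivalence_general X x' hx' t
end
end

section
/- Let κ = 3. (a) For every configuration X_0 : ℤ → ℤ/3ℤ, every integer x', and every n ≥ 0, the walk 𝒮_n defined from X_0 with starting value x' satisfies X_0(n) − X_0(0) ≡ 𝒮_n − 𝒮_0 (mod 3). (b) For fixed i, j ∈ ℤ/3ℤ and a fixed integer x ≥ 0, one has Q^{ij}(x,t) = P(𝒮_1 ≥ 0, 𝒮_2 ≥ 0, …, 𝒮_t ≥ 0) for all t ≥ 0 (in the same i.i.d. setup defining Q^{ij}, but with 𝒮_n in place of 𝒮'_n) if and only if x is not congruent to j modulo 3. -/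
/-!
Since `g(p) ≡ p₃ - p₂ (mod 3)` for every triple, the increments of `𝒮` telescope modulo 3, which
is (a); in the conditioned environment it gives `𝒮_n ≡ x + X₀(n) - j`. The walks `𝒮'` and `𝒮`
differ only where `𝒮_n = -1` at a triple `021`, which forces `x ≡ j`. Conversely, if `x ≡ j`, a
greedy descent from height `x` fixes finitely many colors so that `𝒮` stays nonnegative until it
first hits `-1`, exactly at a triple `021`; on this cylinder of positive probability `𝒮'` survives
(it is `0` there) while `𝒮` dies.
-/

noncomputable section

open FCA3

namespace FCA3

instance (n : ℕ) : MeasurableSpace (ZMod n) := ⊤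

/-- The random environment with `X₀(-1) = i`, `X₀(0) = j` fixed and the remaining
colors given by `ω`. -/
def env (i j : ZMod 3) (ω : ℤ → ZMod 3) : ℤ → ZMod 3 := fun k =>
  if k = -1 then i else if k = 0 then j else ω k

/-- The walk `𝒮_n = x + Σ_{m=0}^{n-1} g(X₀(m-1), X₀(m), X₀(m+1))` in the conditioned
environment. -/
def QS (i j : ZMod 3) (x : ℤ) (ω : ℤ → ZMod 3) (n : ℕ) : ℤ :=
  x + ∑ m ∈ Finset.range n, g3 (vec (env i j ω) (m : ℤ))

/-- The adjusted walk `𝒮'_n = 𝒮_n + 1{𝒮_n = -1 and X⃗₀(n) = (0,2,1)}` in the conditioned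
environment. -/
def QS' (i j : ZMod 3) (x : ℤ) (ω : ℤ → ZMod 3) (n : ℕ) : ℤ :=
  QS i j x ω n +
    (if QS i j x ω n = -1 ∧
        vec (env i j ω) (n : ℤ) = ((0 : ZMod 3), (2 : ZMod 3), (1 : ZMod 3))
     then 1 else 0)

/-- The survival probability `Q^{ij}(x,t)` (as a real number). -/
def Qsurv (μ : MeasureTheory.Measure (ℤ → ZMod 3)) (i j : ZMod 3) (x : ℤ) (t : ℕ) : ℝ :=
  (μ {ω : ℤ → ZMod 3 | ∀ n ∈ Finset.Icc 1 t, 0 ≤ QS' i j x ω n}).toReal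

end FCA3

open MeasureTheory

lemma MeasureTheory.measure_lt_of_disjoint_subset {Ω : Type*} [MeasurableSpace Ω]
    {μ : Measure Ω} [IsFiniteMeasure μ] {A A' C : Set Ω} (hA : A ⊆ A') (hC : C ⊆ A')
    (hAC : Disjoint A C) (hCm : MeasurableSet C) (hC0 : μ C ≠ 0) : μ A < μ A' :=
  calc μ A < μ A + μ C := ENNReal.lt_add_right (measure_ne_top μ A) hC0
    _ = μ (A ∪ C) := (measure_union hAC hCm).symm
    _ ≤ μ A' := measure_mono (Set.union_subset hA hC)

namespace FCA3

def walk (X : ℤ → ZMod 3) (x : ℤ) (n : ℕ) : ℤ :=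
  x + ∑ m ∈ Finset.range n, g3 (vec X (m : ℤ))

def cons (a : ZMod 3) (Z : ℤ → ZMod 3) : ℤ → ZMod 3 := fun k => if k = -1 then a else Z (k - 1)

lemma g3_cast (p : ZMod 3 × ZMod 3 × ZMod 3) : ((g3 p : ℤ) : ZMod 3) = p.2.2 - p.2.1 := by
  revert p; decide

lemma g3_pred {a b : ZMod 3} (h : ¬(a = 0 ∧ b = 2)) : g3 (a, b, b - 1) = -1 := by
  revert a b; decide

@[simp] lemma walk_zero (X : ℤ → ZMod 3) (x : ℤ) : walk X x 0 = x := by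
  simp [walk]

lemma walk_cast (X : ℤ → ZMod 3) (x : ℤ) (n : ℕ) :
    ((walk X x n : ℤ) : ZMod 3) = x + (X n - X 0) := by
  have := Finset.sum_range_sub (fun m : ℕ => X m) n
  push_cast at this
  push_cast [walk, g3_cast, vec, this]
  rfl

lemma vec_congr {X Y : ℤ → ZMod 3} {m : ℤ} (h : Set.EqOn X Y (Set.Icc (m - 1) (m + 1))) :
    vec X m = vec Y m := by
  simp only [vec, Prod.mk.injEq]
  refine ⟨h ?_, h ?_, h ?_⟩ <;> constructor <;> omega

lemma walk_congr {X Y : ℤ → ZMod 3} {n : ℕ} (h : Set.EqOn X Y (Set.Icc (-1) n)) (x : ℤ) :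
    walk X x n = walk Y x n := by
  refine congrArg _ (Finset.sum_congr rfl fun m hm => congrArg _ (vec_congr (h.mono ?_)))
  have := Finset.mem_range.1 hm
  exact Set.Icc_subset_Icc (by omega) (by omega)

lemma vec_cons_zero (a : ZMod 3) (Z : ℤ → ZMod 3) : vec (cons a Z) 0 = (a, Z (-1), Z 0) := by
  simp [vec, cons]

lemma vec_cons_add_one (a : ZMod 3) (Z : ℤ → ZMod 3) {k : ℤ} (hk : 0 ≤ k) :
    vec (cons a Z) (k + 1) = vec Z k := by
  simp [vec, cons, show k ≠ -1 by omega, show k + 1 ≠ -1 by omega, show k + 1 + 1 ≠ -1 by omega]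

lemma walk_cons_succ (a : ZMod 3) (Z : ℤ → ZMod 3) (x : ℤ) (n : ℕ) :
    walk (cons a Z) x (n + 1) = walk Z (x + g3 (vec (cons a Z) 0)) n := by
  simp only [walk, Finset.sum_range_succ', Nat.cast_succ, Nat.cast_zero,
    vec_cons_add_one a Z (Nat.cast_nonneg _)]
  ring

def Descends (Z : ℤ → ZMod 3) (x : ℤ) (n : ℕ) : Prop :=
  (∀ k < n, 0 ≤ walk Z x k) ∧ walk Z x n = -1 ∧ vec Z n = (0, 2, 1)

lemma Descends.cons {Z : ℤ → ZMod 3} {x y : ℤ} {n : ℕ} (h : Descends Z y n) (a : ZMod 3)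
    (hy : x + g3 (vec (cons a Z) 0) = y) (hx : 0 ≤ x) :
    Descends (cons a Z) x (n + 1) := by
  obtain ⟨hpos, hend, hvec⟩ := h
  refine ⟨fun k hk => ?_, by rw [walk_cons_succ, hy, hend], ?_⟩
  · cases k with
    | zero => simpa using hx
    | succ k => rw [walk_cons_succ, hy]; exact hpos k (by omega)
  · rw [Nat.cast_succ, vec_cons_add_one a Z (Nat.cast_nonneg _), hvec]

/-- Descend greedily: step to color `b - 1` (one unit down), except after `02`, where that
step would be the jump `021` of `+2`; there stall once at color `2`. -/
lemma exists_descends (N : ℕ) :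
    ∀ a b : ZMod 3, (N : ZMod 3) = b → ∃ Z n, Z (-1) = a ∧ Z 0 = b ∧ Descends Z N n := by
  induction N with
  | zero =>
    rintro a b rfl
    refine ⟨cons a (cons 0 (cons 2 fun _ => 1)), 1, rfl, rfl, ?_, ?_, ?_⟩
    · intro k hk
      simp [show k = 0 by omega]
    · rw [walk_cons_succ, vec_cons_zero]
      revert a; decide
    · simp [vec, cons]
  | succ N ih =>
    intro a b hb
    push_cast at hb
    by_cases hstall : a = 0 ∧ b = 2
    · obtain ⟨rfl, rfl⟩ := hstall
      obtain ⟨Z, n, hZa, hZb, hZ⟩ := ih 2 1 (by linear_combination hb)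
      refine ⟨cons 0 (cons 2 Z), n + 1 + 1, rfl, by simp [cons], ?_⟩
      refine (hZ.cons 2 (x := N + 1) ?_ (by omega)).cons 0 ?_ (by omega)
      · rw [vec_cons_zero, hZa, hZb, show g3 (2, 2, 1) = -1 by decide]
        ring
      · rw [vec_cons_zero, show cons 2 Z (-1) = 2 by simp [cons],
          show cons 2 Z 0 = 2 by simp [cons, hZa], show g3 (0, 2, 2) = 0 by decide]
        push_cast; ring
    · obtain ⟨Z, n, hZa, hZb, hZ⟩ := ih b (b - 1) (by linear_combination hb)
      refine ⟨cons a Z, n + 1, rfl, by simp [cons, hZa], hZ.cons a ?_ (by omega)⟩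
      rw [vec_cons_zero, hZa, hZb, g3_pred hstall]
      push_cast; ring

lemma QS_eq_walk (i j : ZMod 3) (x : ℤ) (ω : ℤ → ZMod 3) (n : ℕ) :
    QS i j x ω n = walk (env i j ω) x n := rfl

lemma QS_le_QS' (i j : ZMod 3) (x : ℤ) (ω : ℤ → ZMod 3) (n : ℕ) :
    QS i j x ω n ≤ QS' i j x ω n := by
  unfold QS'; split <;> omega

/-- `𝒮_n ≡ x + X₀(n) - j`, so `𝒮_n = -1` with `X₀(n) = 2` forces `x ≡ j`. -/
lemma QS'_eq_QS {i j : ZMod 3} {x : ℤ} (hxj : (x : ZMod 3) ≠ j) (ω : ℤ → ZMod 3) (n : ℕ) :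
    QS' i j x ω n = QS i j x ω n := by
  rw [QS', if_neg, add_zero]
  rintro ⟨hS, hvec⟩
  have hcast := walk_cast (env i j ω) x n
  rw [← QS_eq_walk, hS, show env i j ω n = 2 from congrArg (·.2.1) hvec,
    show env i j ω 0 = j by simp [env]] at hcast
  have h3 : ∀ y j : ZMod 3, ((-1 : ℤ) : ZMod 3) = y + (2 - j) → y = j := by decide
  exact hxj (h3 _ _ hcast)

lemma eqOn_env {i j : ZMod 3} {Z ω : ℤ → ZMod 3} {n : ℤ} (hi : Z (-1) = i) (hj : Z 0 = j)
    (hω : ∀ k ∈ Finset.Icc 1 n, ω k = Z k) : Set.EqOn (env i j ω) Z (Set.Icc (-1) n) := by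
  rintro k ⟨hk1, hkn⟩
  unfold env
  split_ifs with h1 h0
  · rw [h1, hi]
  · rw [h0, hj]
  · exact hω k (Finset.mem_Icc.2 ⟨by omega, hkn⟩)

lemma measurableSet_cylinder (s : Finset ℤ) (f : ℤ → ZMod 3) :
    MeasurableSet {ω : ℤ → ZMod 3 | ∀ k ∈ s, ω k = f k} := by
  simp only [Set.ofPred_forall]
  refine Finset.measurableSet_biInter s fun k _ => ?_
  exact measurable_pi_apply (X := fun _ : ℤ => ZMod 3) k (t := {f k}) trivial

lemma exists_survival_lt (μ : Measure (ℤ → ZMod 3)) [IsFiniteMeasure μ]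
    (hμ : ∀ (s : Finset ℤ) (f : ℤ → ZMod 3), μ {X : ℤ → ZMod 3 | ∀ k ∈ s, X k = f k} ≠ 0)
    (i j : ZMod 3) (N : ℕ) (hN : (N : ZMod 3) = j) :
    ∃ t : ℕ, μ {ω : ℤ → ZMod 3 | ∀ n ∈ Finset.Icc 1 t, 0 ≤ QS i j N ω n} <
      μ {ω : ℤ → ZMod 3 | ∀ n ∈ Finset.Icc 1 t, 0 ≤ QS' i j N ω n} := by
  obtain ⟨Z, t, hZi, hZj, hpos, hend, hvec⟩ := exists_descends N i j hN
  have ht : t ≠ 0 := by rintro rfl; simp at hend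
  set C := {ω : ℤ → ZMod 3 | ∀ k ∈ Finset.Icc (1 : ℤ) (t + 1), ω k = Z k}
  have hC : ∀ ω ∈ C, (∀ k ≤ t, QS i j N ω k = walk Z N k) ∧
      vec (env i j ω) t = vec Z t := by
    intro ω hω
    have heq := eqOn_env hZi hZj hω
    exact ⟨fun k hk => walk_congr (heq.mono (Set.Icc_subset_Icc le_rfl (by omega))) _,
      vec_congr (heq.mono (Set.Icc_subset_Icc (by omega) le_rfl))⟩
  refine ⟨t, measure_lt_of_disjoint_subset (C := C)
    (fun ω hω n hn => (hω n hn).trans (QS_le_QS' ..)) ?_ ?_ (measurableSet_cylinder _ _) (hμ _ _)⟩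
  · intro ω hω n hn
    obtain ⟨hQS, hv⟩ := hC ω hω
    obtain ⟨-, hnt⟩ := Finset.mem_Icc.1 hn
    rcases hnt.lt_or_eq with hlt | rfl
    · exact (hQS n hnt ▸ hpos n hlt).trans (QS_le_QS' ..)
    · rw [QS', hQS n le_rfl, hend, if_pos ⟨rfl, hv.trans hvec⟩]; norm_num
  · refine Set.disjoint_left.2 fun ω hωA hωC => ?_
    have := hωA t (Finset.mem_Icc.2 ⟨by omega, le_rfl⟩)
    rw [(hC ω hωC).1 t le_rfl, hend] at this
    omega

end FCA3

/-- (a) `X₀(n) - X₀(0) ≡ 𝒮_n - 𝒮₀ (mod 3)` for all `n ≥ 0`.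
(b) For fixed `i, j` and fixed `x ≥ 0`, the survival probabilities of `𝒮'` and of `𝒮`
coincide for all `t ≥ 0` if and only if `x` is not congruent to `j` modulo 3. -/
theorem walk_mod3_and_survival
    (μ : Measure (ℤ → ZMod 3)) [IsProbabilityMeasure μ]
    (hμ : ∀ (s : Finset ℤ) (f : ℤ → ZMod 3),
      μ {X : ℤ → ZMod 3 | ∀ k ∈ s, X k = f k} = (3 : ENNReal)⁻¹ ^ s.card) :
    (∀ (X : ℤ → ZMod 3) (x' : ℤ) (n : ℕ),
      X (n : ℤ) - X 0 = ((Scal X x' n - Scal X x' 0 : ℤ) : ZMod 3)) ∧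
    (∀ (i j : ZMod 3) (x : ℤ), 0 ≤ x →
      ((∀ t : ℕ,
          μ {ω : ℤ → ZMod 3 | ∀ n ∈ Finset.Icc 1 t, 0 ≤ QS' i j x ω n} =
            μ {ω : ℤ → ZMod 3 | ∀ n ∈ Finset.Icc 1 t, 0 ≤ QS i j x ω n}) ↔
        (x : ZMod 3) ≠ j)) := by
  refine ⟨fun X x' n => ?_, fun i j x hx => ⟨fun hsame hxj => ?_, fun hxj t => ?_⟩⟩
  · change _ = ((walk X (S0 X x') n - walk X (S0 X x') 0 : ℤ) : ZMod 3)
    push_cast [walk_cast]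
    ring
  · lift x to ℕ using hx
    have hcyl (s : Finset ℤ) (f : ℤ → ZMod 3) : μ {X | ∀ k ∈ s, X k = f k} ≠ 0 := by
      simp [hμ]
    obtain ⟨t, ht⟩ := exists_survival_lt μ hcyl i j x hxj
    exact ht.ne' (hsame t)
  · simp only [QS'_eq_QS hxj]
end
end

section
/- Let A(q,u) be the 5×5 real matrix with rows [3−u, −u/q, −qu, 0, 0], [−qu, 3−u, 0, −u/q, 0], [−u/q, −u/q², 3, 0, −u], [−q²u, −qu, 0, 3, −u], [−u/q, −qu, 0, 0, 3−u], defined for q ≠ 0. Then there exist ε ∈ (0,1) and a continuous function q⁻ : (1−ε, 1) → ℝ such that det A(q⁻(u), u) = 0 and q⁻(u) < 1 for every u ∈ (1−ε, 1), and lim_{u→1⁻} (1 − q⁻(u))/√(1−u) = 3√3/2. -/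
open Filter

noncomputable section

/-- The explicit 5×5 matrix `A(q,u)` from the generating-function analysis. -/
def matA (q u : ℝ) : Matrix (Fin 5) (Fin 5) ℝ :=
  !![3 - u,     -u / q,       -q * u, 0,      0;
     -q * u,    3 - u,        0,      -u / q, 0;
     -u / q,    -u / q ^ 2,   3,      0,      -u;
     -q ^ 2 * u, -q * u,      0,      3,      -u;
     -u / q,    -q * u,       0,      0,      3 - u]

/-!
The determinant depends on `q` only through `q³ + q⁻³`: it equals
`243 (1 - u) - u⁴ (3 + u) (q³ + q⁻³ - 2)`. So `det A(q, u) = 0` exactly when `x = q³` solves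
`x + x⁻¹ = c(u) := 2 + 243 (1 - u) / (u⁴ (3 + u))`, and we take for `x` the smaller root
`(c - √(c² - 4)) / 2`, which lies in `(0, 1)` for `0 < u < 1`. Writing `c = 2 + r s²` with
`s = √(1 - u)` and `r = 243 / (u⁴ (3 + u)) → 243 / 4`, one has
`(1 - x) / s = (√(r (r s² + 4)) - r s) / 2 → √(243 / 4) = 9√3 / 2`, and
`1 - q = (1 - q³) / (1 + q + q²)` divides this limit by `3`.
-/

open Topology Set

theorem det_matA (q u : ℝ) (hq : q ≠ 0) :
    (matA q u).det = 243 * (1 - u) - u ^ 4 * (3 + u) * (q ^ 3 + (q ^ 3)⁻¹ - 2) := by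
  simp only [matA, Matrix.det_succ_row_zero, Fin.sum_univ_succ, Fin.succAbove, Matrix.of_apply,
    Matrix.cons_val', Matrix.cons_val_fin_one, Matrix.cons_val_zero, Matrix.cons_val_one,
    Matrix.cons_val, Matrix.cons_val_succ, Matrix.submatrix_apply, Matrix.det_unique,
    Finset.univ_unique, Finset.sum_singleton, Fin.isValue, Fin.reduceCastSucc, Fin.reduceSucc,
    Fin.reduceLT, Fin.castSucc_zero, Fin.succ_zero_eq_one, Fin.default_eq_zero, Fin.val_succ,
    Fin.coe_ofNat_eq_mod, Fin.lt_one_iff, Fin.reduceEq, Fin.succ_pos,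
    Fin.castSucc_one, Fin.succ_one_eq_two, Fin.castSucc_succ, not_lt_zero, lt_self_iff_false,
    ↓reduceIte, Nat.reduceAdd, Nat.zero_mod]
  field_simp
  ring

/-- The smaller root of `x² - c x + 1`. -/
def smallRoot (c : ℝ) : ℝ := (c - √(c ^ 2 - 4)) / 2

theorem continuous_smallRoot : Continuous smallRoot := by
  unfold smallRoot
  fun_prop

theorem smallRoot_two : smallRoot 2 = 1 := by
  norm_num [smallRoot]

section smallRoot

variable {c : ℝ}

theorem smallRoot_pos (hc : 2 ≤ c) : 0 < smallRoot c := by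
  have : √(c ^ 2 - 4) < c := (Real.sqrt_lt' (by linarith)).mpr (by linarith)
  unfold smallRoot
  linarith

theorem smallRoot_lt_one (hc : 2 < c) : smallRoot c < 1 := by
  have : c - 2 < √(c ^ 2 - 4) := (Real.lt_sqrt (by linarith)).mpr (by nlinarith)
  unfold smallRoot
  linarith

theorem smallRoot_add_inv (hc : 2 ≤ c) : smallRoot c + (smallRoot c)⁻¹ = c := by
  have hroot : smallRoot c ^ 2 - c * smallRoot c + 1 = 0 := by
    have := Real.sq_sqrt (show 0 ≤ c ^ 2 - 4 by nlinarith)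
    unfold smallRoot
    linear_combination this / 4
  have hne := (smallRoot_pos hc).ne'
  field_simp
  linear_combination hroot

end smallRoot

theorem one_sub_smallRoot_div {r s : ℝ} (hs : 0 < s) :
    (1 - smallRoot (2 + r * s ^ 2)) / s = (√(r * (r * s ^ 2 + 4)) - r * s) / 2 := by
  have hsqrt : √((2 + r * s ^ 2) ^ 2 - 4) = s * √(r * (r * s ^ 2 + 4)) := by
    rw [show (2 + r * s ^ 2) ^ 2 - 4 = s ^ 2 * (r * (r * s ^ 2 + 4)) by ring,
      Real.sqrt_mul (sq_nonneg s), Real.sqrt_sq hs.le]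
  rw [smallRoot, hsqrt]
  field_simp
  ring

/-- Near `c = 2` the smaller root is `1 - √(c - 2) + O(c - 2)`. -/
theorem tendsto_one_sub_smallRoot_div {α : Type*} {l : Filter α} {r s : α → ℝ} {k : ℝ}
    (hr : Tendsto r l (𝓝 k)) (hs : Tendsto s l (𝓝 0)) (hs_pos : ∀ᶠ a in l, 0 < s a) :
    Tendsto (fun a => (1 - smallRoot (2 + r a * s a ^ 2)) / s a) l (𝓝 √k) := by
  have hlim : Tendsto (fun a => (√(r a * (r a * s a ^ 2 + 4)) - r a * s a) / 2) l
      (𝓝 ((√(k * (k * 0 ^ 2 + 4)) - k * 0) / 2)) :=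
    (((hr.mul ((hr.mul (hs.pow 2)).add tendsto_const_nhds)).sqrt).sub (hr.mul hs)).div_const 2
  have hval : (√(k * (k * 0 ^ 2 + 4)) - k * 0) / 2 = √k := by
    rw [show k * (k * 0 ^ 2 + 4) = k * 2 ^ 2 by ring, Real.sqrt_mul' k (sq_nonneg 2),
      Real.sqrt_sq zero_le_two]
    ring
  rw [hval] at hlim
  exact hlim.congr' (hs_pos.mono fun a ha => (one_sub_smallRoot_div ha).symm)

theorem tendsto_one_sub_div_of_tendsto_one_sub_pow_div {α : Type*} {l : Filter α}
    {y s : α → ℝ} {L : ℝ} {n : ℕ} (hn : n ≠ 0) (hy : Tendsto y l (𝓝 1))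
    (h : Tendsto (fun a => (1 - y a ^ n) / s a) l (𝓝 L)) :
    Tendsto (fun a => (1 - y a) / s a) l (𝓝 (L / n)) := by
  have hsum : Tendsto (fun a => ∑ i ∈ Finset.range n, y a ^ i) l (𝓝 n) := by
    simpa using tendsto_finsetSum (Finset.range n) fun i _ => hy.pow i
  refine (h.div hsum (Nat.cast_ne_zero.mpr hn)).congr' ?_
  filter_upwards [hsum.eventually_ne (Nat.cast_ne_zero.mpr hn)] with a ha
  rw [Pi.div_apply, ← mul_neg_geom_sum, div_right_comm, mul_div_cancel_right₀ _ ha]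

/-- The value of `q³ + q⁻³` on the curve `det A(q, u) = 0`. -/
def cubeSum (u : ℝ) : ℝ := 2 + 243 * (1 - u) / (u ^ 4 * (3 + u))

/-- The branch `q⁻` of the curve `det A(q, u) = 0`. -/
def qMinus (u : ℝ) : ℝ := smallRoot (cubeSum u) ^ (3 : ℝ)⁻¹

section qMinus

variable {u : ℝ}

theorem two_lt_cubeSum (hu : u ∈ Ioo 0 1) : 2 < cubeSum u := by
  obtain ⟨h0, h1⟩ := hu
  have : 0 < 243 * (1 - u) / (u ^ 4 * (3 + u)) := by
    apply div_pos <;> nlinarith [pow_pos h0 4]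
  unfold cubeSum
  linarith

theorem continuousOn_cubeSum : ContinuousOn cubeSum (Ioi 0) := by
  refine continuousOn_const.add (ContinuousOn.div (by fun_prop) (by fun_prop) fun u hu => ?_)
  have : (0 : ℝ) < u := hu
  positivity

theorem qMinus_pos (hu : u ∈ Ioo 0 1) : 0 < qMinus u :=
  Real.rpow_pos_of_pos (smallRoot_pos (two_lt_cubeSum hu).le) _

theorem qMinus_lt_one (hu : u ∈ Ioo 0 1) : qMinus u < 1 :=
  Real.rpow_lt_one (smallRoot_pos (two_lt_cubeSum hu).le).le
    (smallRoot_lt_one (two_lt_cubeSum hu)) (by norm_num)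

theorem qMinus_pow_three (hu : u ∈ Ioo 0 1) :
    qMinus u ^ 3 = smallRoot (cubeSum u) := by
  rw [qMinus, ← Real.rpow_natCast, ← Real.rpow_mul (smallRoot_pos (two_lt_cubeSum hu).le).le]
  norm_num

theorem det_matA_qMinus (hu : u ∈ Ioo 0 1) : (matA (qMinus u) u).det = 0 := by
  rw [det_matA _ _ (qMinus_pos hu).ne', qMinus_pow_three hu,
    smallRoot_add_inv (two_lt_cubeSum hu).le, cubeSum]
  have h0 : u ≠ 0 := hu.1.ne'
  have h3 : 3 + u ≠ 0 := by linarith [hu.1]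
  field_simp
  ring

theorem continuousOn_qMinus : ContinuousOn qMinus (Ioi 0) :=
  (Real.continuous_rpow_const (by norm_num)).comp_continuousOn
    (continuous_smallRoot.comp_continuousOn continuousOn_cubeSum)

theorem tendsto_qMinus : Tendsto qMinus (𝓝[<] 1) (𝓝 1) := by
  have h := (continuousOn_qMinus.continuousAt (Ioi_mem_nhds one_pos)).tendsto
  rw [qMinus, show cubeSum 1 = 2 by norm_num [cubeSum], smallRoot_two, Real.one_rpow] at h
  exact h.mono_left nhdsWithin_le_nhds

theorem tendsto_one_sub_qMinus_pow_three_div :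
    Tendsto (fun u => (1 - qMinus u ^ 3) / √(1 - u)) (𝓝[<] 1) (𝓝 √(243 / 4)) := by
  have hr : Tendsto (fun u : ℝ => 243 / (u ^ 4 * (3 + u))) (𝓝[<] 1) (𝓝 (243 / 4)) := by
    have : ContinuousAt (fun u : ℝ => 243 / (u ^ 4 * (3 + u))) 1 := by
      fun_prop (disch := norm_num)
    convert this.tendsto.mono_left nhdsWithin_le_nhds using 2
    norm_num
  have hs : Tendsto (fun u : ℝ => √(1 - u)) (𝓝[<] 1) (𝓝 0) := by
    have : ContinuousAt (fun u : ℝ => √(1 - u)) 1 := by fun_prop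
    simpa using this.tendsto.mono_left nhdsWithin_le_nhds
  have hIoo : Ioo 0 1 ∈ 𝓝[<] (1 : ℝ) := Ioo_mem_nhdsLT one_pos
  refine (tendsto_one_sub_smallRoot_div hr hs ?_).congr' ?_
  · filter_upwards [hIoo] with u hu using Real.sqrt_pos.mpr (sub_pos.mpr hu.2)
  · filter_upwards [hIoo] with u hu
    rw [qMinus_pow_three hu, cubeSum, Real.sq_sqrt (sub_pos.mpr hu.2).le, div_mul_eq_mul_div,
      mul_comm 243]

end qMinus

/-- There are `ε ∈ (0,1)` and a continuous function `q⁻` on `(1-ε, 1)`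
with `det A(q⁻(u), u) = 0` and `q⁻(u) < 1` for all `u ∈ (1-ε, 1)`, and
`(1 - q⁻(u))/√(1-u) → 3√3/2` as `u → 1⁻`. -/
theorem matA_root_asymptotics :
    ∃ ε : ℝ, 0 < ε ∧ ε < 1 ∧ ∃ qm : ℝ → ℝ,
      ContinuousOn qm (Set.Ioo (1 - ε) 1) ∧
      (∀ u ∈ Set.Ioo (1 - ε) 1, qm u ≠ 0 ∧ (matA (qm u) u).det = 0 ∧ qm u < 1) ∧
      Tendsto (fun u : ℝ => (1 - qm u) / Real.sqrt (1 - u)) (nhdsWithin 1 (Set.Iio 1))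
        (nhds (3 * Real.sqrt 3 / 2)) := by
  have hIoo : Ioo (1 - 1 / 2) 1 ⊆ Ioo (0 : ℝ) 1 := Ioo_subset_Ioo_left (by norm_num)
  refine ⟨1 / 2, by norm_num, by norm_num, qMinus,
    continuousOn_qMinus.mono fun u hu => (hIoo hu).1, fun u hu => ?_, ?_⟩
  · exact ⟨(qMinus_pos (hIoo hu)).ne', det_matA_qMinus (hIoo hu), qMinus_lt_one (hIoo hu)⟩
  · have hlim := tendsto_one_sub_div_of_tendsto_one_sub_pow_div three_ne_zero tendsto_qMinus
      tendsto_one_sub_qMinus_pow_three_div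
    have hval : √(243 / 4 : ℝ) = 9 / 2 * √3 := by
      rw [show (243 / 4 : ℝ) = (9 / 2) ^ 2 * 3 by norm_num, Real.sqrt_mul (by positivity),
        Real.sqrt_sq (by norm_num)]
    convert hlim using 2
    rw [hval]
    ring
end
end
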